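/- Let ι : C → C̃ = C ⊕ X be an extension of cocommutative coalgebras (as above) and m : C → Hom(A⊗A,A) convolution-associative. A linear map m̃ : C̃ → Hom(A⊗A,A) with m̃∘ι = m is convolution-associative (m̃*(m̃⊗A) = m̃*(A⊗m̃)) if and only if m̃_X := m̃|_X satisfies the generalized Maurer–Cartan equation d_X^2(m̃_X) + ζ = 0. -/

import Mathlib

open TensorProduct

noncomputable section

namespace DefCx2

variable {k : Type*} [Field k]
variable {A : Type*} [AddCommGroup A] [Module k A]
variable {C : Type*} [AddCommGroup C] [Module k C] [Coalgebra k C]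
variable {X : Type*} [AddCommGroup X] [Module k X]

/-- Convolution-associativity of `μ : D → Hom(A⊗A, A)` with respect to an (explicitly
given) comultiplication `Δ` on `D`:
`Σ μ(d₍₁₎)∘(μ(d₍₂₎)⊗A) = Σ μ(d₍₁₎)∘(A⊗μ(d₍₂₎))` as maps `(A⊗A)⊗A → A`. -/
def ConvAssocWith {D : Type*} [AddCommGroup D] [Module k D]
    (Δ : D →ₗ[k] D ⊗[k] D) (μ : D →ₗ[k] (A ⊗[k] A →ₗ[k] A)) : Prop :=
  TensorProduct.lift (LinearMap.mk₂ k
      (fun d d' => (μ d) ∘ₗ LinearMap.rTensor A (μ d'))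
      (by intro x y c; simp [map_add, LinearMap.add_comp])
      (by intro r x c; simp [map_smul, LinearMap.smul_comp])
      (by intro x c c'; simp [map_add, LinearMap.rTensor_add, LinearMap.comp_add])
      (by intro r x c; simp [map_smul, LinearMap.rTensor_smul, LinearMap.comp_smul])) ∘ₗ Δ
  =
  TensorProduct.lift (LinearMap.mk₂ k
      (fun d d' => (μ d) ∘ₗ LinearMap.lTensor A (μ d') ∘ₗ
        (TensorProduct.assoc k A A A).toLinearMap)
      (by intro x y c; simp [map_add, LinearMap.add_comp])
      (by intro r x c; simp [map_smul, LinearMap.smul_comp])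
      (by intro x c c'
          simp [map_add, LinearMap.lTensor_add, LinearMap.comp_add, LinearMap.add_comp])
      (by intro r x c
          simp [map_smul, LinearMap.lTensor_smul, LinearMap.comp_smul,
            LinearMap.smul_comp])) ∘ₗ Δ

/-- The degree-2 differential
`d²(ν)(x) = Σ m(x₍1₎)∘(A⊗ν(x₍0₎)) − Σ ν(x₍0₎)∘(m(x₍1₎)⊗A) + Σ ν(x₍0₎)∘(A⊗m(x₍1₎))
 − Σ m(x₍1₎)∘(ν(x₍0₎)⊗A)` as maps `(A⊗A)⊗A → A`. -/
def d2 (ρ : X →ₗ[k] X ⊗[k] C) (m : C →ₗ[k] (A ⊗[k] A →ₗ[k] A))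
    (ν : X →ₗ[k] (A ⊗[k] A →ₗ[k] A)) :
    X →ₗ[k] ((A ⊗[k] A) ⊗[k] A →ₗ[k] A) :=
  TensorProduct.lift (LinearMap.mk₂ k
    (fun x c =>
      (m c) ∘ₗ LinearMap.lTensor A (ν x) ∘ₗ (TensorProduct.assoc k A A A).toLinearMap
      - (ν x) ∘ₗ LinearMap.rTensor A (m c)
      + (ν x) ∘ₗ LinearMap.lTensor A (m c) ∘ₗ (TensorProduct.assoc k A A A).toLinearMap
      - (m c) ∘ₗ LinearMap.rTensor A (ν x))
    (by intro x y c
        simp [map_add, LinearMap.lTensor_add, LinearMap.rTensor_add, LinearMap.add_comp,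
          LinearMap.comp_add]
        abel)
    (by intro r x c
        simp [map_smul, LinearMap.lTensor_smul, LinearMap.rTensor_smul,
          LinearMap.smul_comp, LinearMap.comp_smul, smul_sub, smul_add])
    (by intro x c c'
        simp [map_add, LinearMap.lTensor_add, LinearMap.rTensor_add, LinearMap.add_comp,
          LinearMap.comp_add]
        abel)
    (by intro r x c
        simp [map_smul, LinearMap.lTensor_smul, LinearMap.rTensor_smul,
          LinearMap.smul_comp, LinearMap.comp_smul, smul_sub, smul_add])) ∘ₗ ρ

/-- The identification `((A⊗A)⊗A)⊗A ≃ A⊗((A⊗A)⊗A)`. -/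
def eA4first : (((A ⊗[k] A) ⊗[k] A) ⊗[k] A) ≃ₗ[k] A ⊗[k] ((A ⊗[k] A) ⊗[k] A) :=
  ((TensorProduct.assoc k (A ⊗[k] A) A A).trans
    (TensorProduct.assoc k A A (A ⊗[k] A))).trans
      (TensorProduct.congr (LinearEquiv.refl k A) (TensorProduct.assoc k A A A).symm)

/-- The degree-3 differential `d³ = Σ_{i=0}^{4} (−1)^i d_i³` of the complex `C_X^*(A,m)`,
as maps `((A⊗A)⊗A)⊗A → A`. -/
def d3 (ρ : X →ₗ[k] X ⊗[k] C) (m : C →ₗ[k] (A ⊗[k] A →ₗ[k] A))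
    (ν : X →ₗ[k] ((A ⊗[k] A) ⊗[k] A →ₗ[k] A)) :
    X →ₗ[k] (((A ⊗[k] A) ⊗[k] A) ⊗[k] A →ₗ[k] A) :=
  TensorProduct.lift (LinearMap.mk₂ k
    (fun x c =>
      (m c) ∘ₗ LinearMap.lTensor A (ν x) ∘ₗ (eA4first (k := k) (A := A)).toLinearMap
      - (ν x) ∘ₗ LinearMap.rTensor A (LinearMap.rTensor A (m c))
      + (ν x) ∘ₗ LinearMap.rTensor A (LinearMap.lTensor A (m c)) ∘ₗ
          (TensorProduct.congr (TensorProduct.assoc k A A A)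
            (LinearEquiv.refl k A)).toLinearMap
      - (ν x) ∘ₗ LinearMap.lTensor (A ⊗[k] A) (m c) ∘ₗ
          (TensorProduct.assoc k (A ⊗[k] A) A A).toLinearMap
      + (m c) ∘ₗ LinearMap.rTensor A (ν x))
    (by intro x y c
        simp [map_add, LinearMap.lTensor_add, LinearMap.rTensor_add, LinearMap.add_comp,
          LinearMap.comp_add]
        abel)
    (by intro r x c
        simp [map_smul, LinearMap.lTensor_smul, LinearMap.rTensor_smul,
          LinearMap.smul_comp, LinearMap.comp_smul, smul_sub, smul_add])
    (by intro x c c'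
        simp [map_add, LinearMap.lTensor_add, LinearMap.rTensor_add, LinearMap.add_comp,
          LinearMap.comp_add]
        abel)
    (by intro r x c
        simp [map_smul, LinearMap.lTensor_smul, LinearMap.rTensor_smul,
          LinearMap.smul_comp, LinearMap.comp_smul, smul_sub, smul_add])) ∘ₗ ρ

/-- The obstruction
`ζ(x) = Σ m(ω₁(x))∘(A⊗m(ω₂(x))) − Σ m(ω₁(x))∘(m(ω₂(x))⊗A)` as maps `(A⊗A)⊗A → A`. -/
def zeta (ω : X →ₗ[k] C ⊗[k] C) (m : C →ₗ[k] (A ⊗[k] A →ₗ[k] A)) :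
    X →ₗ[k] ((A ⊗[k] A) ⊗[k] A →ₗ[k] A) :=
  TensorProduct.lift (LinearMap.mk₂ k
    (fun c c' =>
      (m c) ∘ₗ LinearMap.lTensor A (m c') ∘ₗ (TensorProduct.assoc k A A A).toLinearMap
      - (m c) ∘ₗ LinearMap.rTensor A (m c'))
    (by intro x y c; simp [map_add, LinearMap.add_comp]; abel)
    (by intro r x c; simp [map_smul, LinearMap.smul_comp, smul_sub])
    (by intro x c c'
        simp [map_add, LinearMap.lTensor_add, LinearMap.rTensor_add, LinearMap.comp_add,
          LinearMap.add_comp]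
        abel)
    (by intro r x c
        simp [map_smul, LinearMap.lTensor_smul, LinearMap.rTensor_smul,
          LinearMap.comp_smul, LinearMap.smul_comp, smul_sub])) ∘ₗ ω

/-- The comultiplication on `C̃ = C ⊕ X` built from the comultiplication of `C`, a
symmetric coaction `ρ` on `X` and a symmetric 2-cocycle `ω : X → C ⊗ C`. -/
def extComul (ρ : X →ₗ[k] X ⊗[k] C) (ω : X →ₗ[k] C ⊗[k] C) :
    (C × X) →ₗ[k] (C × X) ⊗[k] (C × X) :=
  TensorProduct.map (LinearMap.inl k C X) (LinearMap.inl k C X) ∘ₗ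
      (Coalgebra.comul : C →ₗ[k] C ⊗[k] C) ∘ₗ LinearMap.fst k C X
    + TensorProduct.map (LinearMap.inl k C X) (LinearMap.inr k C X) ∘ₗ
      ((TensorProduct.comm k X C).toLinearMap ∘ₗ ρ) ∘ₗ LinearMap.snd k C X
    + TensorProduct.map (LinearMap.inr k C X) (LinearMap.inl k C X) ∘ₗ
      ρ ∘ₗ LinearMap.snd k C X
    + TensorProduct.map (LinearMap.inl k C X) (LinearMap.inl k C X) ∘ₗ
      ω ∘ₗ LinearMap.snd k C X

end DefCx2

end

/-!
Write `δ(μ) : d ⊗ d' ↦ μ(d) ∘ (μ(d') ⊗ A) − μ(d) ∘ (A ⊗ μ(d'))`, so that `μ` is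
convolution-associative iff `δ(μ) ∘ Δ = 0`. Splitting the comultiplication of `C ⊕ X` into its
four summands, `δ(m̃) ∘ Δ̃` evaluated at `(c, x)` is `δ(m)(Δc)`, minus `d²(m̃_X)(x)` coming from
the two mixed summands, minus `ζ(x)` coming from `ω`. The first term vanishes because `m` is
convolution-associative.
-/

namespace DefCx2

variable {k : Type*} [Field k] {A : Type*} [AddCommGroup A] [Module k A]
  {D E : Type*} [AddCommGroup D] [Module k D] [AddCommGroup E] [Module k E]

def assocDefect (μ : D →ₗ[k] (A ⊗[k] A →ₗ[k] A)) :
    D ⊗[k] D →ₗ[k] ((A ⊗[k] A) ⊗[k] A →ₗ[k] A) :=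
  TensorProduct.lift (LinearMap.mk₂ k
      (fun d d' => (μ d) ∘ₗ LinearMap.rTensor A (μ d'))
      (by intro x y c; simp [map_add, LinearMap.add_comp])
      (by intro r x c; simp [map_smul, LinearMap.smul_comp])
      (by intro x c c'; simp [map_add, LinearMap.rTensor_add, LinearMap.comp_add])
      (by intro r x c; simp [map_smul, LinearMap.rTensor_smul, LinearMap.comp_smul]))
  -
  TensorProduct.lift (LinearMap.mk₂ k
      (fun d d' => (μ d) ∘ₗ LinearMap.lTensor A (μ d') ∘ₗ
        (TensorProduct.assoc k A A A).toLinearMap)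
      (by intro x y c; simp [map_add, LinearMap.add_comp])
      (by intro r x c; simp [map_smul, LinearMap.smul_comp])
      (by intro x c c'
          simp [map_add, LinearMap.lTensor_add, LinearMap.comp_add, LinearMap.add_comp])
      (by intro r x c
          simp [map_smul, LinearMap.lTensor_smul, LinearMap.comp_smul,
            LinearMap.smul_comp]))

@[simp]
lemma assocDefect_tmul (μ : D →ₗ[k] (A ⊗[k] A →ₗ[k] A)) (d d' : D) :
    assocDefect μ (d ⊗ₜ d') = (μ d) ∘ₗ LinearMap.rTensor A (μ d')
      - (μ d) ∘ₗ LinearMap.lTensor A (μ d') ∘ₗ (TensorProduct.assoc k A A A).toLinearMap :=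
  rfl

lemma convAssocWith_iff (Δ : D →ₗ[k] D ⊗[k] D) (μ : D →ₗ[k] (A ⊗[k] A →ₗ[k] A)) :
    ConvAssocWith Δ μ ↔ assocDefect μ ∘ₗ Δ = 0 := by
  rw [assocDefect, LinearMap.sub_comp, sub_eq_zero]
  rfl

lemma assocDefect_comp_map (μ : D →ₗ[k] (A ⊗[k] A →ₗ[k] A)) (f : E →ₗ[k] D) :
    assocDefect μ ∘ₗ TensorProduct.map f f = assocDefect (μ ∘ₗ f) :=
  TensorProduct.ext' fun _ _ => rfl

variable {C X : Type*} [AddCommGroup C] [Module k C] [AddCommGroup X] [Module k X]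

lemma zeta_eq_neg_assocDefect_comp (ω : X →ₗ[k] C ⊗[k] C) (m : C →ₗ[k] (A ⊗[k] A →ₗ[k] A)) :
    zeta ω m = -(assocDefect m ∘ₗ ω) := by
  rw [zeta, ← LinearMap.neg_comp]
  congr 1
  refine TensorProduct.ext' fun c c' => ?_
  simp only [TensorProduct.lift.tmul, LinearMap.mk₂_apply, LinearMap.neg_apply,
    assocDefect_tmul, neg_sub]

lemma d2_eq_neg_assocDefect_comp (ρ : X →ₗ[k] X ⊗[k] C)
    (μ : (C × X) →ₗ[k] (A ⊗[k] A →ₗ[k] A)) :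
    d2 ρ (μ ∘ₗ LinearMap.inl k C X) (μ ∘ₗ LinearMap.inr k C X) =
      -(assocDefect μ ∘ₗ
        (TensorProduct.map (LinearMap.inl k C X) (LinearMap.inr k C X) ∘ₗ
            (TensorProduct.comm k X C).toLinearMap
          + TensorProduct.map (LinearMap.inr k C X) (LinearMap.inl k C X)) ∘ₗ ρ) := by
  rw [d2, ← LinearMap.comp_assoc, ← LinearMap.neg_comp]
  congr 1
  refine TensorProduct.ext' fun x c => ?_
  simp only [TensorProduct.lift.tmul, LinearMap.mk₂_apply, LinearMap.neg_apply,
    LinearMap.comp_apply, LinearMap.add_apply, map_add, LinearEquiv.coe_coe,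
    TensorProduct.comm_tmul, TensorProduct.map_tmul, assocDefect_tmul]
  abel

lemma assocDefect_comp_extComul [Coalgebra k C] (ρ : X →ₗ[k] X ⊗[k] C)
    (ω : X →ₗ[k] C ⊗[k] C) (μ : (C × X) →ₗ[k] (A ⊗[k] A →ₗ[k] A)) :
    assocDefect μ ∘ₗ extComul ρ ω =
      assocDefect (μ ∘ₗ LinearMap.inl k C X) ∘ₗ Coalgebra.comul ∘ₗ LinearMap.fst k C X
      - (d2 ρ (μ ∘ₗ LinearMap.inl k C X) (μ ∘ₗ LinearMap.inr k C X)
          + zeta ω (μ ∘ₗ LinearMap.inl k C X)) ∘ₗ LinearMap.snd k C X := by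
  rw [d2_eq_neg_assocDefect_comp, zeta_eq_neg_assocDefect_comp, ← assocDefect_comp_map,
    extComul]
  simp only [LinearMap.comp_add, LinearMap.add_comp, LinearMap.neg_comp, LinearMap.comp_assoc]
  abel

end DefCx2

open DefCx2 in
theorem maurer_cartan_characterization_general {k : Type*} [Field k] {A C X : Type*}
    [AddCommGroup A] [Module k A]
    [AddCommGroup C] [Module k C] [Coalgebra k C]
    [AddCommGroup X] [Module k X]
    (ρ : X →ₗ[k] X ⊗[k] C)
    (ω : X →ₗ[k] C ⊗[k] C)
    (m : C →ₗ[k] (A ⊗[k] A →ₗ[k] A))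
    (hm : ConvAssocWith (Coalgebra.comul : C →ₗ[k] C ⊗[k] C) m)
    (mt : (C × X) →ₗ[k] (A ⊗[k] A →ₗ[k] A))
    (hrestrict : mt ∘ₗ LinearMap.inl k C X = m) :
    ConvAssocWith (extComul ρ ω) mt ↔
      d2 ρ m (mt ∘ₗ LinearMap.inr k C X) + zeta ω m = 0 := by
  subst hrestrict
  rw [convAssocWith_iff, assocDefect_comp_extComul, ← LinearMap.comp_assoc,
    (convAssocWith_iff _ _).mp hm, LinearMap.zero_comp, zero_sub, neg_eq_zero]
  refine ⟨fun h => ?_, fun h => by rw [h, LinearMap.zero_comp]⟩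
  rw [← LinearMap.comp_id (_ + _), ← LinearMap.snd_comp_inr k C X, ← LinearMap.comp_assoc, h,
    LinearMap.zero_comp]

open DefCx2 in
/-- Let `ι : C → C̃ = C ⊕ X` be an extension of cocommutative coalgebras
and `m : C → Hom(A⊗A,A)` convolution-associative. A linear map `m̃ : C̃ → Hom(A⊗A,A)`
with `m̃ ∘ ι = m` is convolution-associative if and only if `m̃_X := m̃|_X` satisfies the
generalized Maurer–Cartan equation `d_X^2(m̃_X) + ζ = 0`. -/
theorem maurer_cartan_characterization {k : Type*} [Field k] {A C X : Type*}
    [AddCommGroup A] [Module k A]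
    [AddCommGroup C] [Module k C] [Coalgebra k C]
    [AddCommGroup X] [Module k X]
    (hcocomm : (TensorProduct.comm k C C).toLinearMap ∘ₗ
      (Coalgebra.comul : C →ₗ[k] C ⊗[k] C) = Coalgebra.comul)
    (ρ : X →ₗ[k] X ⊗[k] C)
    (hcoassoc : (TensorProduct.assoc k X C C).toLinearMap ∘ₗ LinearMap.rTensor C ρ ∘ₗ ρ =
      LinearMap.lTensor X (Coalgebra.comul : C →ₗ[k] C ⊗[k] C) ∘ₗ ρ)
    (hcounit : (TensorProduct.rid k X).toLinearMap ∘ₗ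
      LinearMap.lTensor X (Coalgebra.counit : C →ₗ[k] k) ∘ₗ ρ = LinearMap.id)
    (ω : X →ₗ[k] C ⊗[k] C)
    (hsymm : (TensorProduct.comm k C C).toLinearMap ∘ₗ ω = ω)
    (hnorm₁ : (TensorProduct.lid k C).toLinearMap ∘ₗ
      LinearMap.rTensor C (Coalgebra.counit : C →ₗ[k] k) ∘ₗ ω = 0)
    (hnorm₂ : (TensorProduct.rid k C).toLinearMap ∘ₗ
      LinearMap.lTensor C (Coalgebra.counit : C →ₗ[k] k) ∘ₗ ω = 0)
    (hcocycle : LinearMap.lTensor C ω ∘ₗ ((TensorProduct.comm k X C).toLinearMap ∘ₗ ρ)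
      - (TensorProduct.assoc k C C C).toLinearMap ∘ₗ
          LinearMap.rTensor C (Coalgebra.comul : C →ₗ[k] C ⊗[k] C) ∘ₗ ω
      + LinearMap.lTensor C (Coalgebra.comul : C →ₗ[k] C ⊗[k] C) ∘ₗ ω
      - (TensorProduct.assoc k C C C).toLinearMap ∘ₗ LinearMap.rTensor C ω ∘ₗ ρ = 0)
    (m : C →ₗ[k] (A ⊗[k] A →ₗ[k] A))
    (hm : ConvAssocWith (Coalgebra.comul : C →ₗ[k] C ⊗[k] C) m)
    (mt : (C × X) →ₗ[k] (A ⊗[k] A →ₗ[k] A))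
    (hrestrict : mt ∘ₗ LinearMap.inl k C X = m) :
    ConvAssocWith (extComul ρ ω) mt ↔
      d2 ρ m (mt ∘ₗ LinearMap.inr k C X) + zeta ω m = 0 :=
  maurer_cartan_characterization_general ρ ω m hm mt hrestrict
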